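/- Let n be a positive integer, σ > 0, and let φ₁, φ₂ : ℝⁿ → ℝ be bounded continuous functions. Define G(α) = exp(−(∑_{i=1}^n αᵢ²)/(2σ²)), ΔG(α) = ((∑_{i=1}^n αᵢ² − nσ²)/σ⁴)·G(α), and the G-LoG bi-filter functions γ¹_φ(x) = ∫_{ℝⁿ} φ(x − α)·G(α) dα and γ²_φ(x) = ∫_{ℝⁿ} φ(x − α)·ΔG(α) dα. Then max{ sup_{x ∈ ℝⁿ} |γ¹_{φ₁}(x) − γ¹_{φ₂}(x)|, sup_{x ∈ ℝⁿ} |γ²_{φ₁}(x) − γ²_{φ₂}(x)| } ≤ C · sup_{x ∈ ℝⁿ} |φ₁(x) − φ₂(x)|, where C = max{ (2πσ²)^{n/2}, 2n(2πσ²)^{n/2}/σ² }. -/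

import Mathlib

open MeasureTheory Real

/-!
Both differences are integrals of `(φ₁ - φ₂)(x - α)` against a fixed integrable kernel `K`, hence
bounded by `‖K‖₁ · sup |φ₁ - φ₂|`. The Gaussian factors over coordinates, so Fubini and the
one-dimensional integrals `∫ exp (-b x²) = √(π / b)` and `∫ x² exp (-b x²) = √(π / b) / (2b)` give
`‖G‖₁ = (2πσ²)^(n/2)` and `∫ (∑ αᵢ²) G = nσ² ‖G‖₁`. Bounding `|∑ αᵢ² - nσ²|` by `∑ αᵢ² + nσ²` then
yields `‖ΔG‖₁ ≤ 2n (2πσ²)^(n/2) / σ²`.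
-/

theorem integral_sq_mul_exp_neg_mul_sq {b : ℝ} (hb : 0 < b) :
    ∫ x : ℝ, x ^ 2 * exp (-b * x ^ 2) = (2 * b)⁻¹ * √(π / b) := by
  have h_rpow : ∫ x in Set.Ioi (0 : ℝ), x ^ 2 * exp (-b * x ^ 2)
      = ∫ x in Set.Ioi (0 : ℝ), x ^ (2 : ℝ) * exp (-b * x ^ (2 : ℝ)) := by
    simp only [rpow_ofNat]
  have h_gamma : Gamma ((2 + 1) / 2) = √π / 2 := by
    rw [show ((2 : ℝ) + 1) / 2 = 1 / 2 + 1 by norm_num, Gamma_add_one (by norm_num),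
      Gamma_one_half_eq]
    ring
  have h_pow : b ^ (-(2 + 1) / 2 : ℝ) = (b * √b)⁻¹ := by
    rw [show (-(2 + 1) / 2 : ℝ) = -(1 + 1 / 2) by norm_num, rpow_neg hb.le,
      rpow_add hb, rpow_one, ← sqrt_eq_rpow]
  calc ∫ x : ℝ, x ^ 2 * exp (-b * x ^ 2)
      = ∫ x : ℝ, |x| ^ 2 * exp (-b * |x| ^ 2) := by simp only [sq_abs]
    _ = 2 * ∫ x in Set.Ioi (0 : ℝ), x ^ 2 * exp (-b * x ^ 2) :=
        integral_comp_abs (f := fun x => x ^ 2 * exp (-b * x ^ 2))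
    _ = (2 * b)⁻¹ * √(π / b) := by
      rw [h_rpow, integral_rpow_mul_exp_neg_mul_rpow two_pos (by norm_num) hb, h_gamma, h_pow,
        sqrt_div' _ hb.le]
      field_simp

theorem integrable_sq_mul_exp_neg_mul_sq {b : ℝ} (hb : 0 < b) :
    Integrable fun x : ℝ => x ^ 2 * exp (-b * x ^ 2) := by
  simpa only [rpow_ofNat] using integrable_rpow_mul_exp_neg_mul_sq hb (s := 2) (by norm_num)

section Pi

variable {ι : Type*} [Fintype ι] {b : ℝ}

theorem exp_neg_mul_sum_sq (b : ℝ) (α : ι → ℝ) :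
    exp (-b * ∑ i, α i ^ 2) = ∏ i, exp (-b * α i ^ 2) := by
  rw [Finset.mul_sum, exp_sum]

theorem integrable_exp_neg_mul_sum_sq (hb : 0 < b) :
    Integrable fun α : ι → ℝ => exp (-b * ∑ i, α i ^ 2) := by
  simp_rw [exp_neg_mul_sum_sq]
  exact Integrable.fintype_prod fun _ => integrable_exp_neg_mul_sq hb

theorem integral_exp_neg_mul_sum_sq (b : ℝ) :
    ∫ α : ι → ℝ, exp (-b * ∑ i, α i ^ 2) = √(π / b) ^ Fintype.card ι := by
  simp_rw [exp_neg_mul_sum_sq]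
  rw [integral_fintype_prod_volume_eq_pow (fun x => exp (-b * x ^ 2)), integral_gaussian]

variable [DecidableEq ι]

theorem sq_mul_exp_neg_mul_sum_sq (b : ℝ) (α : ι → ℝ) (i : ι) :
    α i ^ 2 * exp (-b * ∑ j, α j ^ 2)
      = ∏ j, (if j = i then α j ^ 2 else 1) * exp (-b * α j ^ 2) := by
  rw [Finset.prod_mul_distrib, Finset.prod_ite_eq' Finset.univ i, if_pos (Finset.mem_univ i),
    exp_neg_mul_sum_sq]

theorem integrable_sq_mul_exp_neg_mul_sum_sq (hb : 0 < b) (i : ι) :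
    Integrable fun α : ι → ℝ => α i ^ 2 * exp (-b * ∑ j, α j ^ 2) := by
  have h_factor (j : ι) :
      Integrable fun x : ℝ => (if j = i then x ^ 2 else 1) * exp (-b * x ^ 2) := by
    split_ifs
    · exact integrable_sq_mul_exp_neg_mul_sq hb
    · simpa only [one_mul] using integrable_exp_neg_mul_sq hb
  simp_rw [sq_mul_exp_neg_mul_sum_sq b _ i]
  exact Integrable.fintype_prod h_factor

theorem integral_sq_mul_exp_neg_mul_sum_sq (hb : 0 < b) (i : ι) :
    ∫ α : ι → ℝ, α i ^ 2 * exp (-b * ∑ j, α j ^ 2) = (2 * b)⁻¹ * √(π / b) ^ Fintype.card ι := by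
  have h_factor (j : ι) : ∫ x : ℝ, (if j = i then x ^ 2 else 1) * exp (-b * x ^ 2)
      = (if j = i then (2 * b)⁻¹ else 1) * √(π / b) := by
    split_ifs
    · exact integral_sq_mul_exp_neg_mul_sq hb
    · simp only [one_mul, integral_gaussian]
  simp_rw [sq_mul_exp_neg_mul_sum_sq b _ i]
  rw [integral_fintype_prod_volume_eq_prod
    (fun j x => (if j = i then x ^ 2 else 1) * exp (-b * x ^ 2))]
  simp_rw [h_factor]
  rw [Finset.prod_mul_distrib, Finset.prod_ite_eq' Finset.univ i, if_pos (Finset.mem_univ i),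
    Finset.prod_const, Finset.card_univ]

omit [DecidableEq ι]

theorem integrable_sum_sq_mul_exp_neg_mul_sum_sq (hb : 0 < b) :
    Integrable fun α : ι → ℝ => (∑ i, α i ^ 2) * exp (-b * ∑ i, α i ^ 2) := by
  classical
  simp_rw [Finset.sum_mul]
  exact integrable_finsetSum _ fun i _ => integrable_sq_mul_exp_neg_mul_sum_sq hb i

theorem integral_sum_sq_mul_exp_neg_mul_sum_sq (hb : 0 < b) :
    ∫ α : ι → ℝ, (∑ i, α i ^ 2) * exp (-b * ∑ i, α i ^ 2)
      = Fintype.card ι * ((2 * b)⁻¹ * √(π / b) ^ Fintype.card ι) := by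
  classical
  simp_rw [Finset.sum_mul]
  rw [integral_finsetSum _ fun i _ => integrable_sq_mul_exp_neg_mul_sum_sq hb i]
  simp_rw [integral_sq_mul_exp_neg_mul_sum_sq hb]
  rw [Finset.sum_const, Finset.card_univ, nsmul_eq_mul]

end Pi

theorem pi_div_inv_two_mul_sq (σ : ℝ) : π / (2 * σ ^ 2)⁻¹ = 2 * π * σ ^ 2 := by
  rw [div_inv_eq_mul]
  ring

section Kernels

variable {ι : Type*} [Fintype ι] {σ : ℝ}

noncomputable def gaussianKernel (σ : ℝ) (α : ι → ℝ) : ℝ :=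
  exp (-(∑ i, α i ^ 2) / (2 * σ ^ 2))

noncomputable def laplacianGaussianKernel (σ : ℝ) (α : ι → ℝ) : ℝ :=
  ((∑ i, α i ^ 2 - Fintype.card ι * σ ^ 2) / σ ^ 4) * gaussianKernel σ α

theorem gaussianKernel_eq_exp_neg_mul_sum_sq (σ : ℝ) (α : ι → ℝ) :
    gaussianKernel σ α = exp (-(2 * σ ^ 2)⁻¹ * ∑ i, α i ^ 2) := by
  rw [gaussianKernel, neg_mul, neg_div, div_eq_inv_mul]

theorem gaussianKernel_pos (σ : ℝ) (α : ι → ℝ) : 0 < gaussianKernel σ α :=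
  exp_pos _

theorem integrable_gaussianKernel (hσ : σ ≠ 0) : Integrable (gaussianKernel (ι := ι) σ) := by
  simp_rw [funext (gaussianKernel_eq_exp_neg_mul_sum_sq σ)]
  exact integrable_exp_neg_mul_sum_sq (by positivity)

theorem integral_gaussianKernel (σ : ℝ) :
    ∫ α : ι → ℝ, gaussianKernel σ α = (2 * π * σ ^ 2) ^ ((Fintype.card ι : ℝ) / 2) := by
  simp_rw [gaussianKernel_eq_exp_neg_mul_sum_sq σ]
  rw [integral_exp_neg_mul_sum_sq, pi_div_inv_two_mul_sq, rpow_div_two_eq_sqrt _ (by positivity),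
    rpow_natCast]

theorem integral_abs_gaussianKernel (σ : ℝ) :
    ∫ α : ι → ℝ, |gaussianKernel σ α| = (2 * π * σ ^ 2) ^ ((Fintype.card ι : ℝ) / 2) := by
  simp_rw [abs_of_pos (gaussianKernel_pos σ _)]
  exact integral_gaussianKernel σ

theorem integrable_sum_sq_mul_gaussianKernel (hσ : σ ≠ 0) :
    Integrable fun α : ι → ℝ => (∑ i, α i ^ 2) * gaussianKernel σ α := by
  simp_rw [gaussianKernel_eq_exp_neg_mul_sum_sq σ]
  exact integrable_sum_sq_mul_exp_neg_mul_sum_sq (by positivity)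

theorem integral_sum_sq_mul_gaussianKernel (hσ : σ ≠ 0) :
    ∫ α : ι → ℝ, (∑ i, α i ^ 2) * gaussianKernel σ α
      = Fintype.card ι * σ ^ 2 * (2 * π * σ ^ 2) ^ ((Fintype.card ι : ℝ) / 2) := by
  have h_var : (2 * (2 * σ ^ 2)⁻¹)⁻¹ = σ ^ 2 := by field_simp
  simp_rw [gaussianKernel_eq_exp_neg_mul_sum_sq σ]
  rw [integral_sum_sq_mul_exp_neg_mul_sum_sq (by positivity), h_var, pi_div_inv_two_mul_sq,
    rpow_div_two_eq_sqrt _ (by positivity), rpow_natCast]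
  ring

theorem laplacianGaussianKernel_eq (σ : ℝ) :
    laplacianGaussianKernel (ι := ι) σ = fun α =>
      (σ ^ 4)⁻¹ * ((∑ i, α i ^ 2) * gaussianKernel σ α)
        - (Fintype.card ι * σ ^ 2 / σ ^ 4) * gaussianKernel σ α := by
  ext α
  rw [laplacianGaussianKernel]
  ring

theorem integrable_laplacianGaussianKernel (hσ : σ ≠ 0) :
    Integrable (laplacianGaussianKernel (ι := ι) σ) := by
  rw [laplacianGaussianKernel_eq]
  exact ((integrable_sum_sq_mul_gaussianKernel hσ).const_mul _).sub
    ((integrable_gaussianKernel hσ).const_mul _)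

theorem abs_laplacianGaussianKernel_le (σ : ℝ) (α : ι → ℝ) :
    |laplacianGaussianKernel σ α|
      ≤ (σ ^ 4)⁻¹ * ((∑ i, α i ^ 2) * gaussianKernel σ α
        + Fintype.card ι * σ ^ 2 * gaussianKernel σ α) := by
  have h_sum : 0 ≤ ∑ i, α i ^ 2 := Finset.sum_nonneg fun i _ => sq_nonneg _
  have h_var : (0 : ℝ) ≤ Fintype.card ι * σ ^ 2 := by positivity
  have h_gauss := (gaussianKernel_pos σ α).le
  rw [laplacianGaussianKernel, abs_mul, abs_of_pos (gaussianKernel_pos σ α), abs_div,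
    abs_of_nonneg (by positivity : (0 : ℝ) ≤ σ ^ 4), div_eq_inv_mul, mul_assoc, ← add_mul]
  gcongr
  exact abs_le.2 ⟨by linarith, by linarith⟩

theorem integral_abs_laplacianGaussianKernel_le (hσ : σ ≠ 0) :
    ∫ α : ι → ℝ, |laplacianGaussianKernel σ α|
      ≤ 2 * Fintype.card ι * (2 * π * σ ^ 2) ^ ((Fintype.card ι : ℝ) / 2) / σ ^ 2 := by
  have h_int := (integrable_sum_sq_mul_gaussianKernel (ι := ι) hσ).add
    ((integrable_gaussianKernel hσ).const_mul (Fintype.card ι * σ ^ 2))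
  calc ∫ α : ι → ℝ, |laplacianGaussianKernel σ α|
      ≤ ∫ α : ι → ℝ, (σ ^ 4)⁻¹ * ((∑ i, α i ^ 2) * gaussianKernel σ α
          + Fintype.card ι * σ ^ 2 * gaussianKernel σ α) :=
        integral_mono (integrable_laplacianGaussianKernel hσ).abs (h_int.const_mul _)
          (abs_laplacianGaussianKernel_le σ)
    _ = 2 * Fintype.card ι * (2 * π * σ ^ 2) ^ ((Fintype.card ι : ℝ) / 2) / σ ^ 2 := by
      rw [integral_const_mul, integral_add (integrable_sum_sq_mul_gaussianKernel hσ)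
        ((integrable_gaussianKernel hσ).const_mul _), integral_const_mul,
        integral_sum_sq_mul_gaussianKernel hσ, integral_gaussianKernel]
      field_simp
      ring

end Kernels

theorem abs_integral_mul_sub_integral_mul_le {X : Type*} [MeasurableSpace X] {μ : Measure X}
    {f₁ f₂ K : X → ℝ} {C₁ C₂ M : ℝ} (hK : Integrable K μ)
    (hf₁ : AEStronglyMeasurable f₁ μ) (hf₂ : AEStronglyMeasurable f₂ μ)
    (hC₁ : ∀ x, |f₁ x| ≤ C₁) (hC₂ : ∀ x, |f₂ x| ≤ C₂) (hM : ∀ x, |f₁ x - f₂ x| ≤ M) :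
    |∫ x, f₁ x * K x ∂μ - ∫ x, f₂ x * K x ∂μ| ≤ M * ∫ x, |K x| ∂μ := by
  have h_int₁ : Integrable (fun x => f₁ x * K x) μ := hK.bdd_mul hf₁ (.of_forall hC₁)
  have h_int₂ : Integrable (fun x => f₂ x * K x) μ := hK.bdd_mul hf₂ (.of_forall hC₂)
  rw [← integral_sub h_int₁ h_int₂, ← integral_const_mul M fun x => |K x|]
  refine (Real.norm_eq_abs _).symm.trans_le
    (norm_integral_le_of_norm_le (hK.abs.const_mul M) (.of_forall fun x => ?_))
  rw [← sub_mul, norm_mul, Real.norm_eq_abs, Real.norm_eq_abs]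
  exact mul_le_mul_of_nonneg_right (hM x) (abs_nonneg _)

theorem iSup_abs_integral_comp_sub_mul_sub_le {E : Type*} [TopologicalSpace E] [Sub E]
    [ContinuousSub E] [MeasurableSpace E] [OpensMeasurableSpace E] {μ : Measure E}
    {φ₁ φ₂ K : E → ℝ} (hφ₁c : Continuous φ₁) (hφ₂c : Continuous φ₂)
    (hφ₁b : ∃ C, ∀ x, |φ₁ x| ≤ C) (hφ₂b : ∃ C, ∀ x, |φ₂ x| ≤ C) (hK : Integrable K μ) :
    ⨆ x, |∫ α, φ₁ (x - α) * K α ∂μ - ∫ α, φ₂ (x - α) * K α ∂μ|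
      ≤ (∫ α, |K α| ∂μ) * ⨆ x, |φ₁ x - φ₂ x| := by
  obtain ⟨C₁, hC₁⟩ := hφ₁b
  obtain ⟨C₂, hC₂⟩ := hφ₂b
  have h_bdd : BddAbove (Set.range fun x => |φ₁ x - φ₂ x|) :=
    ⟨C₁ + C₂, Set.forall_mem_range.2 fun x => (abs_sub _ _).trans (add_le_add (hC₁ x) (hC₂ x))⟩
  have h_sup_nonneg : 0 ≤ ⨆ x, |φ₁ x - φ₂ x| := Real.iSup_nonneg fun _ => abs_nonneg _
  refine Real.iSup_le (fun x => ?_)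
    (mul_nonneg (integral_nonneg fun _ => abs_nonneg _) h_sup_nonneg)
  rw [mul_comm]
  exact abs_integral_mul_sub_integral_mul_le hK
    (hφ₁c.comp (continuous_const.sub continuous_id)).aestronglyMeasurable
    (hφ₂c.comp (continuous_const.sub continuous_id)).aestronglyMeasurable
    (fun α => hC₁ (x - α)) (fun α => hC₂ (x - α)) (fun α => le_ciSup h_bdd (x - α))

theorem glog_bifiltration_sup_bound_general
    (n : ℕ) (σ : ℝ) (hσ : 0 < σ)
    (φ₁ φ₂ : (Fin n → ℝ) → ℝ)
    (hφ₁c : Continuous φ₁) (hφ₂c : Continuous φ₂)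
    (hφ₁b : ∃ C, ∀ x, |φ₁ x| ≤ C) (hφ₂b : ∃ C, ∀ x, |φ₂ x| ≤ C)
    (G ΔG : (Fin n → ℝ) → ℝ)
    (hG : ∀ α : Fin n → ℝ, G α = Real.exp (-(∑ i, (α i) ^ 2) / (2 * σ ^ 2)))
    (hΔG : ∀ α : Fin n → ℝ,
      ΔG α = (((∑ i, (α i) ^ 2) - n * σ ^ 2) / σ ^ 4) * G α)
    (γ₁ γ₂ : ((Fin n → ℝ) → ℝ) → (Fin n → ℝ) → ℝ)
    (hγ₁ : ∀ φ x, γ₁ φ x = ∫ α : Fin n → ℝ, φ (x - α) * G α)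
    (hγ₂ : ∀ φ x, γ₂ φ x = ∫ α : Fin n → ℝ, φ (x - α) * ΔG α) :
    max (⨆ x : Fin n → ℝ, |γ₁ φ₁ x - γ₁ φ₂ x|)
        (⨆ x : Fin n → ℝ, |γ₂ φ₁ x - γ₂ φ₂ x|)
      ≤ max ((2 * Real.pi * σ ^ 2) ^ ((n : ℝ) / 2))
            (2 * n * (2 * Real.pi * σ ^ 2) ^ ((n : ℝ) / 2) / σ ^ 2)
          * ⨆ x : Fin n → ℝ, |φ₁ x - φ₂ x| := by
  obtain rfl : G = gaussianKernel σ := funext hG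
  obtain rfl : ΔG = laplacianGaussianKernel σ :=
    funext fun α => by rw [hΔG, laplacianGaussianKernel, Fintype.card_fin]
  have h_sup_nonneg : 0 ≤ ⨆ x, |φ₁ x - φ₂ x| := Real.iSup_nonneg fun _ => abs_nonneg _
  simp_rw [hγ₁, hγ₂]
  refine max_le ?_ ?_
  · calc _ ≤ (∫ α, |gaussianKernel σ α|) * ⨆ x, |φ₁ x - φ₂ x| :=
          iSup_abs_integral_comp_sub_mul_sub_le hφ₁c hφ₂c hφ₁b hφ₂b
            (integrable_gaussianKernel hσ.ne')
      _ ≤ _ := by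
          rw [integral_abs_gaussianKernel, Fintype.card_fin]
          exact mul_le_mul_of_nonneg_right (le_max_left _ _) h_sup_nonneg
  · calc _ ≤ (∫ α, |laplacianGaussianKernel σ α|) * ⨆ x, |φ₁ x - φ₂ x| :=
          iSup_abs_integral_comp_sub_mul_sub_le hφ₁c hφ₂c hφ₁b hφ₂b
            (integrable_laplacianGaussianKernel hσ.ne')
      _ ≤ _ := by
          refine mul_le_mul_of_nonneg_right ?_ h_sup_nonneg
          refine (integral_abs_laplacianGaussianKernel_le hσ.ne').trans ?_
          rw [Fintype.card_fin]
          exact le_max_right _ _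

/-- Stability of the G-LoG bi-filter functions: for bounded continuous
`φ₁ φ₂ : ℝⁿ → ℝ`, with `G(α) = exp(−(∑ αᵢ²)/(2σ²))`,
`ΔG(α) = ((∑ αᵢ² − nσ²)/σ⁴)·G(α)`, `γ¹_φ = φ ∗ G` and `γ²_φ = φ ∗ ΔG`, we have
`max(‖γ¹_{φ₁} − γ¹_{φ₂}‖_∞, ‖γ²_{φ₁} − γ²_{φ₂}‖_∞) ≤ C · ‖φ₁ − φ₂‖_∞` where
`C = max((2πσ²)^(n/2), 2n(2πσ²)^(n/2)/σ²)`. -/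
theorem glog_bifiltration_sup_bound
    (n : ℕ) (hn : 0 < n) (σ : ℝ) (hσ : 0 < σ)
    (φ₁ φ₂ : (Fin n → ℝ) → ℝ)
    (hφ₁c : Continuous φ₁) (hφ₂c : Continuous φ₂)
    (hφ₁b : ∃ C, ∀ x, |φ₁ x| ≤ C) (hφ₂b : ∃ C, ∀ x, |φ₂ x| ≤ C)
    (G ΔG : (Fin n → ℝ) → ℝ)
    (hG : ∀ α : Fin n → ℝ, G α = Real.exp (-(∑ i, (α i) ^ 2) / (2 * σ ^ 2)))
    (hΔG : ∀ α : Fin n → ℝ,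
      ΔG α = (((∑ i, (α i) ^ 2) - n * σ ^ 2) / σ ^ 4) * G α)
    (γ₁ γ₂ : ((Fin n → ℝ) → ℝ) → (Fin n → ℝ) → ℝ)
    (hγ₁ : ∀ φ x, γ₁ φ x = ∫ α : Fin n → ℝ, φ (x - α) * G α)
    (hγ₂ : ∀ φ x, γ₂ φ x = ∫ α : Fin n → ℝ, φ (x - α) * ΔG α) :
    max (⨆ x : Fin n → ℝ, |γ₁ φ₁ x - γ₁ φ₂ x|)
        (⨆ x : Fin n → ℝ, |γ₂ φ₁ x - γ₂ φ₂ x|)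
      ≤ max ((2 * Real.pi * σ ^ 2) ^ ((n : ℝ) / 2))
            (2 * n * (2 * Real.pi * σ ^ 2) ^ ((n : ℝ) / 2) / σ ^ 2)
          * ⨆ x : Fin n → ℝ, |φ₁ x - φ₂ x| :=
  glog_bifiltration_sup_bound_general n σ hσ φ₁ φ₂ hφ₁c hφ₂c hφ₁b hφ₂b G ΔG hG hΔG γ₁ γ₂ hγ₁ hγ₂
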